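/- Let N ≥ 1 and let (S_1, G_1), …, (S_{N+1}, G_{N+1}) be random pairs on a probability space (Ω, 𝓕, μ), with S_i real-valued scores and G_i ∈ {0,1} group labels, such that the family ((S_1, G_1), …, (S_{N+1}, G_{N+1})) is exchangeable. Let α ∈ (0,1) and let g ∈ {0,1} satisfy μ(G_{N+1} = g) > 0. For each ω, let I(ω) = { i ∈ {1, …, N} : G_i(ω) = g }, let m(ω) = |I(ω)|, let k(ω) = ⌈(1 − α)(m(ω) + 1)⌉, and define the Mondrian coverage event E_g to consist of those ω such that either k(ω) > m(ω), or S_{N+1}(ω) is at most the k(ω)-th order statistic of the multiset { S_i(ω) : i ∈ I(ω) }. Then μ( E_g ∣ G_{N+1} = g ) ≥ 1 − α. -/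

import Mathlib

/-!
Call an index `j` of group `g` *miscovered* when at least `⌈(1 - α) M⌉` of the `M` members of
group `g` score strictly below it. The lowest miscovered member already has that many members
below it, none of them miscovered, so at most `M - ⌈(1 - α) M⌉ ≤ α M` members are miscovered.
By exchangeability every index is miscovered with the same probability as the test point, and
lies in group `g` with the same probability as the test point; summing over all indices turns
the pointwise count into `μ(test point miscovered) ≤ α μ(G_{N+1} = g)`. Finally, a test point
in group `g` that is not miscovered lies below the `⌈(1 - α)(m + 1)⌉`-th order statistic of
the `m` calibration scores of its group.
-/

open MeasureTheory

/-- A finite family of random variables is exchangeable if its joint law is invariant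
under permutations of the indices. -/
def Exchangeable {Ω E : Type*} [MeasurableSpace Ω] [MeasurableSpace E]
    (μ : Measure Ω) {M : ℕ} (Z : Fin M → Ω → E) : Prop :=
  ∀ σ : Equiv.Perm (Fin M),
    Measure.map (fun ω => fun i => Z (σ i) ω) μ = Measure.map (fun ω => fun i => Z i ω) μ

/-- The `k`-th order statistic (1-indexed, counted with multiplicity) of the multiset of
values `{s i : i ∈ I}`: the least `x` such that at least `k` of those values are `≤ x`. -/
noncomputable def orderStatOn {ι : Type*} (I : Finset ι) (s : ι → ℝ) (k : ℕ) : ℝ :=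
  sInf {x : ℝ | k ≤ (I.filter fun i => s i ≤ x).card}

open Finset
open scoped ENNReal

theorem Fin.card_filter_univ_castSucc {n : ℕ} (p : Fin (n + 1) → Prop) [DecidablePred p] :
    #{i | p i} = #{i : Fin n | p i.castSucc} + if p (Fin.last n) then 1 else 0 := by
  simp only [card_filter, Fin.sum_univ_castSucc]

section OrderStatistics

variable {ι γ : Type*}

def strictRank [LinearOrder γ] (J : Finset ι) (s : ι → γ) (j : ι) : ℕ :=
  #{i ∈ J | s i < s j}

theorem card_filter_le_strictRank_le_card_sub [LinearOrder γ] (J : Finset ι) (s : ι → γ)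
    (k : ℕ) : #{j ∈ J | k ≤ strictRank J s j} ≤ #J - k := by
  set T := {j ∈ J | k ≤ strictRank J s j}
  classical
  obtain hT | hT := T.eq_empty_or_nonempty
  · simp [hT]
  -- everything strictly below the lowest element of `T` lies outside `T`
  obtain ⟨j₀, hj₀, hmin⟩ := T.exists_min_image s hT
  have hbelow : {i ∈ J | s i < s j₀} ⊆ J \ T := fun i hi => by
    rw [mem_filter] at hi
    exact mem_sdiff.2 ⟨hi.1, fun hiT => (hmin i hiT).not_gt hi.2⟩
  have hk : k ≤ #(J \ T) := (mem_filter.1 hj₀).2.trans (card_le_card hbelow)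
  have hTJ : T ⊆ J := filter_subset _ _
  rw [card_sdiff_of_subset hTJ] at hk
  have hTcard := card_le_card hTJ
  omega

theorem le_orderStatOn {I : Finset ι} {s : ι → ℝ} {k : ℕ} {t : ℝ} (hkI : k ≤ #I)
    (h : #{i ∈ I | s i < t} < k) : t ≤ orderStatOn I s k := by
  obtain ⟨M, hM⟩ := (I.image s).bddAbove
  have hfull : {i ∈ I | s i ≤ M} = I :=
    filter_true_of_mem fun i hi => hM (mem_coe.2 (mem_image_of_mem s hi))
  refine le_csInf ⟨M, by simpa [hfull] using hkI⟩ fun x hx => le_of_not_gt fun hxt => ?_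
  have hsub : {i ∈ I | s i ≤ x} ⊆ {i ∈ I | s i < t} :=
    monotone_filter_right I fun _ _ hi => hi.trans_lt hxt
  exact (hx.trans (card_le_card hsub)).not_gt h

end OrderStatistics

section Measurability

variable {ι Ω : Type*} [Fintype ι] [MeasurableSpace Ω]

theorem measurable_card_filter {p : ι → Ω → Prop}
    [∀ i ω, Decidable (p i ω)] (hp : ∀ i, MeasurableSet {ω | p i ω}) :
    Measurable fun ω => #{i | p i ω} := by
  simp_rw [card_filter]
  exact Finset.measurable_sum _ fun i _ => Measurable.ite (hp i) measurable_const measurable_const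

open Classical in
theorem lintegral_card_filter_mem {μ : Measure Ω} {B : ι → Set Ω}
    (hB : ∀ j, MeasurableSet (B j)) :
    ∫⁻ ω, (#{j | ω ∈ B j} : ℝ≥0∞) ∂μ = ∑ j, μ (B j) := by
  have hsum : ∀ ω, (#{j | ω ∈ B j} : ℝ≥0∞) = ∑ j, (B j).indicator 1 ω := fun ω => by
    simp [Set.indicator_apply]
  simp_rw [hsum]
  rw [lintegral_finsetSum _ fun j _ => measurable_one.indicator (hB j)]
  exact sum_congr rfl fun j _ => lintegral_indicator_one (hB j)

end Measurability

section Mondrian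

variable {ι β : Type*} [Fintype ι] [DecidableEq β]

def groupMembers (z : ι → ℝ × β) (g : β) : Finset ι :=
  {i | (z i).2 = g}

/-- `z ∈ miscoverSet α g j` says that the point `j` of group `g` would fall outside the Mondrian
conformal set built from the other members of its group: with `m + 1` members in all, at least
`⌈(1 - α) (m + 1)⌉` of them score strictly below it. -/
def miscoverSet (α : ℝ) (g : β) (j : ι) : Set (ι → ℝ × β) :=
  {z | j ∈ groupMembers z g ∧
    ⌈(1 - α) * #(groupMembers z g)⌉₊ ≤ strictRank (groupMembers z g) (fun i => (z i).1) j}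

open Classical in
theorem card_miscoverSet_le {α : ℝ} (hα : 0 ≤ α) (z : ι → ℝ × β) (g : β) :
    (#{j | z ∈ miscoverSet α g j} : ℝ) ≤ α * #(groupMembers z g) := by
  set J := groupMembers z g
  set k := ⌈(1 - α) * #J⌉₊
  have hT := card_filter_le_strictRank_le_card_sub J (fun i => (z i).1) k
  set T := {j ∈ J | k ≤ strictRank J (fun i => (z i).1) j}
  have hmiss : ({j | z ∈ miscoverSet α g j} : Finset ι) = T := by
    ext j
    simp [miscoverSet, J, k, T]
  have hceil : (1 - α) * #J ≤ k := Nat.le_ceil _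
  rw [hmiss]
  obtain h | h : #T + k ≤ #J ∨ #T = 0 := by omega
  · have h' : (#T : ℝ) + k ≤ #J := by exact_mod_cast h
    linarith
  · rw [h, Nat.cast_zero]
    positivity

theorem comp_mem_miscoverSet_iff (σ : Equiv.Perm ι) (z : ι → ℝ × β) (α : ℝ) (g : β)
    (j : ι) :
    z ∘ σ ∈ miscoverSet α g j ↔ z ∈ miscoverSet α g (σ j) := by
  have hcard : #(groupMembers (z ∘ σ) g) = #(groupMembers z g) :=
    card_equiv σ fun i => by simp [groupMembers]
  have hrank : strictRank (groupMembers (z ∘ σ) g) (fun i => ((z ∘ σ) i).1) j =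
      strictRank (groupMembers z g) (fun i => (z i).1) (σ j) :=
    card_equiv σ fun i => by simp [groupMembers]
  simp only [miscoverSet, Set.mem_ofPred_eq, hcard, hrank]
  simp [groupMembers]

theorem measurableSet_miscoverSet [MeasurableSpace β] [MeasurableSingletonClass β] (α : ℝ)
    (g : β) (j : ι) : MeasurableSet (miscoverSet α g j) := by
  have hgroup : ∀ i, MeasurableSet {z : ι → ℝ × β | (z i).2 = g} := fun i =>
    (measurable_pi_apply i).snd (measurableSet_singleton g)
  have hcard : Measurable fun z : ι → ℝ × β => #(groupMembers z g) :=
    measurable_card_filter hgroup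
  have hrank : Measurable fun z : ι → ℝ × β =>
      strictRank (groupMembers z g) (fun i => (z i).1) j := by
    simp only [strictRank, groupMembers, filter_filter]
    exact measurable_card_filter
      (p := fun i (z : ι → ℝ × β) => (z i).2 = g ∧ (z i).1 < (z j).1) fun i => (hgroup i).inter (measurableSet_lt (f := fun z : ι → ℝ × β => (z i).1)
        (measurable_pi_apply i).fst (measurable_pi_apply j).fst)
  have hk : Measurable fun z : ι → ℝ × β => ⌈(1 - α) * #(groupMembers z g)⌉₊ :=
    (measurable_from_nat (f := fun n : ℕ => ⌈(1 - α) * n⌉₊)).comp hcard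
  have hj : MeasurableSet {z : ι → ℝ × β | j ∈ groupMembers z g} := by
    simpa [groupMembers] using hgroup j
  exact hj.inter (measurableSet_le hk hrank)

theorem coverage_of_not_mem_miscoverSet {N : ℕ} {z : Fin (N + 1) → ℝ × β} {g : β} {α : ℝ}
    (hlast : (z (Fin.last N)).2 = g) (hz : z ∉ miscoverSet α g (Fin.last N)) :
    #{i : Fin N | (z i.castSucc).2 = g} <
        ⌈(1 - α) * ((#{i : Fin N | (z i.castSucc).2 = g} : ℝ) + 1)⌉₊ ∨
      (z (Fin.last N)).1 ≤ orderStatOn {i : Fin N | (z i.castSucc).2 = g}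
        (fun i => (z i.castSucc).1)
        ⌈(1 - α) * ((#{i : Fin N | (z i.castSucc).2 = g} : ℝ) + 1)⌉₊ := by
  set I : Finset (Fin N) := {i | (z i.castSucc).2 = g}
  set k := ⌈(1 - α) * ((#I : ℝ) + 1)⌉₊
  have hcard : #(groupMembers z g) = #I + 1 := by
    simp [groupMembers, Fin.card_filter_univ_castSucc, hlast, I]
  have hrank : strictRank (groupMembers z g) (fun i => (z i).1) (Fin.last N) =
      #{i ∈ I | (z i.castSucc).1 < (z (Fin.last N)).1} := by
    simp [strictRank, groupMembers, filter_filter, Fin.card_filter_univ_castSucc, I]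
  have hbelow : #{i ∈ I | (z i.castSucc).1 < (z (Fin.last N)).1} < k := by
    rw [← hrank, ← not_le]
    refine fun hk => hz ⟨by simpa [groupMembers] using hlast, ?_⟩
    rwa [hcard, Nat.cast_succ]
  exact (lt_or_ge #I k).imp_right fun hkI => le_orderStatOn hkI hbelow

end Mondrian

section Probability

variable {Ω : Type*} [MeasurableSpace Ω] {μ : Measure Ω}

open Classical in
theorem measure_le_mul_of_card_mem_le {ι : Type*} [Fintype ι] {B P : ι → Set Ω}
    (hB : ∀ j, MeasurableSet (B j)) (hP : ∀ j, MeasurableSet (P j)) (j₀ : ι)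
    (hBeq : ∀ j, μ (B j) = μ (B j₀)) (hPeq : ∀ j, μ (P j) = μ (P j₀)) {c : ℝ≥0∞}
    (hcard : ∀ ω, (#{j | ω ∈ B j} : ℝ≥0∞) ≤ c * #{j | ω ∈ P j}) :
    μ (B j₀) ≤ c * μ (P j₀) := by
  have : Nonempty ι := ⟨j₀⟩
  have hι : (Fintype.card ι : ℝ≥0∞) ≠ 0 := Nat.cast_ne_zero.2 Fintype.card_ne_zero
  rw [← ENNReal.mul_le_mul_iff_right hι (ENNReal.natCast_ne_top _)]
  have hPcard : Measurable fun ω => (#{j | ω ∈ P j} : ℝ≥0∞) :=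
    measurable_from_nat.comp (measurable_card_filter (p := fun j ω => ω ∈ P j) hP)
  calc (Fintype.card ι : ℝ≥0∞) * μ (B j₀) = ∑ j, μ (B j) := by simp [hBeq]
    _ = ∫⁻ ω, (#{j | ω ∈ B j} : ℝ≥0∞) ∂μ := (lintegral_card_filter_mem hB).symm
    _ ≤ ∫⁻ ω, c * #{j | ω ∈ P j} ∂μ := lintegral_mono hcard
    _ = c * ∑ j, μ (P j) := by
      rw [lintegral_const_mul c hPcard, lintegral_card_filter_mem hP]
    _ = Fintype.card ι * (c * μ (P j₀)) := by
      simp only [hPeq, sum_const, card_univ, nsmul_eq_mul]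
      ring

theorem ofReal_one_sub_le_measure_inter_div [IsFiniteMeasure μ] {A B P : Set Ω} {α : ℝ}
    (hα : 0 ≤ α) (hP : μ P ≠ 0) (hB : μ B ≤ ENNReal.ofReal α * μ P)
    (hsub : P \ B ⊆ A) :
    ENNReal.ofReal (1 - α) ≤ μ (A ∩ P) / μ P := by
  rw [ENNReal.le_div_iff_mul_le (Or.inl hP) (Or.inl (measure_ne_top μ P))]
  have hcover : μ P ≤ μ (A ∩ P) + ENNReal.ofReal α * μ P :=
    calc μ P ≤ μ (A ∩ P ∪ B) := measure_mono fun ω hω =>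
          (em (ω ∈ B)).elim Or.inr fun hωB => Or.inl ⟨hsub ⟨hω, hωB⟩, hω⟩
      _ ≤ μ (A ∩ P) + μ B := measure_union_le _ _
      _ ≤ μ (A ∩ P) + ENNReal.ofReal α * μ P := by gcongr
  rw [ENNReal.ofReal_sub _ hα, ENNReal.ofReal_one,
    ENNReal.sub_mul fun _ _ => measure_ne_top μ P, one_mul]
  exact tsub_le_iff_right.2 hcover

variable {E : Type*} [MeasurableSpace E] {M : ℕ}

theorem Exchangeable.measure_comp_perm_mem {Z : Fin M → Ω → E} (hZ : Exchangeable μ Z)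
    (hmeas : ∀ i, Measurable (Z i)) {A : Set (Fin M → E)} (hA : MeasurableSet A)
    (σ : Equiv.Perm (Fin M)) :
    μ {ω | (fun i => Z (σ i) ω) ∈ A} = μ {ω | (fun i => Z i ω) ∈ A} := by
  have hσ := Measure.map_apply (μ := μ) (measurable_pi_lambda _ fun i => hmeas (σ i)) hA
  rw [hZ σ, Measure.map_apply (measurable_pi_lambda _ hmeas) hA] at hσ
  exact hσ.symm

theorem Exchangeable.measure_mem_eq_of_equivariant {Z : Fin M → Ω → E}
    (hZ : Exchangeable μ Z) (hmeas : ∀ i, Measurable (Z i)) {A : Fin M → Set (Fin M → E)}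
    (hA : ∀ j, MeasurableSet (A j))
    (hequiv : ∀ (σ : Equiv.Perm (Fin M)) z j, z ∘ σ ∈ A j ↔ z ∈ A (σ j)) (j j' : Fin M) :
    μ {ω | (fun i => Z i ω) ∈ A j'} = μ {ω | (fun i => Z i ω) ∈ A j} := by
  have hswap : {ω | (fun i => Z i ω) ∈ A j'} =
      {ω | (fun i => Z (Equiv.swap j j' i) ω) ∈ A j} := by
    ext ω
    have := hequiv (Equiv.swap j j') (fun i => Z i ω) j
    rw [Equiv.swap_apply_left] at this
    exact this.symm
  rw [hswap, hZ.measure_comp_perm_mem hmeas (hA j)]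

open Classical in
theorem Exchangeable.measure_miscoverSet_le {β : Type*} [MeasurableSpace β]
    [MeasurableSingletonClass β] [DecidableEq β] {Z : Fin M → Ω → ℝ × β}
    (hZ : Exchangeable μ Z) (hmeas : ∀ i, Measurable (Z i)) {α : ℝ} (hα : 0 ≤ α) (g : β)
    (j : Fin M) :
    μ {ω | (fun i => Z i ω) ∈ miscoverSet α g j} ≤
      ENNReal.ofReal α * μ {ω | (Z j ω).2 = g} := by
  have hgroup : ∀ j, MeasurableSet {z : Fin M → ℝ × β | (z j).2 = g} := fun j =>
    (measurable_pi_apply j).snd (measurableSet_singleton g)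
  refine measure_le_mul_of_card_mem_le (P := fun j => {ω | (Z j ω).2 = g})
    (fun j => measurable_pi_lambda _ hmeas (measurableSet_miscoverSet α g j))
    (fun j => (hmeas j).snd (measurableSet_singleton g)) j
    (fun j' => hZ.measure_mem_eq_of_equivariant hmeas (measurableSet_miscoverSet α g)
      (fun σ z => comp_mem_miscoverSet_iff σ z α g) j j')
    (fun j' => hZ.measure_mem_eq_of_equivariant hmeas (A := fun j => {z | (z j).2 = g}) hgroup
      (fun _ _ _ => Iff.rfl) j j')
    fun ω => ?_
  have hmiss := ENNReal.ofReal_le_ofReal (card_miscoverSet_le hα (fun i => Z i ω) g)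
  rw [ENNReal.ofReal_natCast, ENNReal.ofReal_mul hα, ENNReal.ofReal_natCast] at hmiss
  refine hmiss.trans_eq ?_
  rw [groupMembers]
  congr

end Probability

theorem mondrian_two_group_coverage_general
    {Ω : Type*} [MeasurableSpace Ω] (μ : Measure Ω) [IsProbabilityMeasure μ]
    (N : ℕ)
    (S : Fin (N + 1) → Ω → ℝ) (G : Fin (N + 1) → Ω → Fin 2)
    (hSmeas : ∀ i, Measurable (S i)) (hGmeas : ∀ i, Measurable (G i))
    (hexch : Exchangeable μ (fun i ω => (S i ω, G i ω)))
    (α : ℝ) (hα0 : 0 < α)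
    (g : Fin 2) (hg : 0 < μ {ω | G (Fin.last N) ω = g}) :
    ENNReal.ofReal (1 - α) ≤
      μ ({ω |
            (Finset.univ.filter fun i : Fin N => G i.castSucc ω = g).card <
              ⌈(1 - α) *
                (((Finset.univ.filter fun i : Fin N => G i.castSucc ω = g).card : ℝ) + 1)⌉₊ ∨
            S (Fin.last N) ω ≤
              orderStatOn (Finset.univ.filter fun i : Fin N => G i.castSucc ω = g)
                (fun i => S i.castSucc ω)
                ⌈(1 - α) *
                  (((Finset.univ.filter fun i : Fin N => G i.castSucc ω = g).card : ℝ) + 1)⌉₊}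
          ∩ {ω | G (Fin.last N) ω = g}) /
        μ {ω | G (Fin.last N) ω = g} := by
  refine ofReal_one_sub_le_measure_inter_div hα0.le hg.ne'
    (hexch.measure_miscoverSet_le (fun i => (hSmeas i).prodMk (hGmeas i)) hα0.le g (Fin.last N))
    ?_
  rintro ω ⟨hlast, hmiss⟩
  exact coverage_of_not_mem_miscoverSet (z := fun i => (S i ω, G i ω)) hlast hmiss

/-- Two-group Mondrian conformal coverage guarantee (Lemma 3.2, ground-truth feasibility
conformal coverage): for exchangeable score/group pairs, coverage holds with probability
at least `1 - α` conditionally on the test point's group `g ∈ {0,1}`. -/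
theorem mondrian_two_group_coverage
    {Ω : Type*} [MeasurableSpace Ω] (μ : Measure Ω) [IsProbabilityMeasure μ]
    (N : ℕ) (hN : 1 ≤ N)
    (S : Fin (N + 1) → Ω → ℝ) (G : Fin (N + 1) → Ω → Fin 2)
    (hSmeas : ∀ i, Measurable (S i)) (hGmeas : ∀ i, Measurable (G i))
    (hexch : Exchangeable μ (fun i ω => (S i ω, G i ω)))
    (α : ℝ) (hα0 : 0 < α) (hα1 : α < 1)
    (g : Fin 2) (hg : 0 < μ {ω | G (Fin.last N) ω = g}) :
    ENNReal.ofReal (1 - α) ≤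
      μ ({ω |
            (Finset.univ.filter fun i : Fin N => G i.castSucc ω = g).card <
              ⌈(1 - α) *
                (((Finset.univ.filter fun i : Fin N => G i.castSucc ω = g).card : ℝ) + 1)⌉₊ ∨
            S (Fin.last N) ω ≤
              orderStatOn (Finset.univ.filter fun i : Fin N => G i.castSucc ω = g)
                (fun i => S i.castSucc ω)
                ⌈(1 - α) *
                  (((Finset.univ.filter fun i : Fin N => G i.castSucc ω = g).card : ℝ) + 1)⌉₊}
          ∩ {ω | G (Fin.last N) ω = g}) /
        μ {ω | G (Fin.last N) ω = g} :=
  mondrian_two_group_coverage_general μ N S G hSmeas hGmeas hexch α hα0 g hg
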